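/- Let L be a finite distributive lattice with rank function r, μ : L → ℝ≥0 log-supermodular, and f, g : L → ℝ≥0 both increasing (or both decreasing). Then the polynomial (∑_x μ(x)q^{r(x)})(∑_x f(x)g(x)μ(x)q^{r(x)}) − (∑_x f(x)μ(x)q^{r(x)})(∑_x g(x)μ(x)q^{r(x)}) in the variable q has all coefficients non-negative. -/

import Mathlib

/-!
By Birkhoff's representation theorem the rank of `x` is the number of sup-irreducibles below `x`,
so the rank is modular: `r (x ⊓ y) + r (x ⊔ y) = r x + r y`. Hence the coefficient of `q ^ k` on
either side is a sum over the fibres `{(x, y) | x ⊓ y = a, x ⊔ y = b}` with `r a + r b = k`, and it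
suffices to compare the two sides fibre by fibre.

A fibre is a sublattice of `L × Lᵒᵈ`, on which `(x, y) ↦ μ x * μ y` is log-supermodular and
`(x, y) ↦ f x - f y`, `(x, y) ↦ g x - g y` are monotone. The swap `(x, y) ↦ (y, x)` preserves the
fibre and the weight, so these functions have mean zero, and the FKG inequality on the fibre gives
`∑ μ x μ y (f x - f y) (g x - g y) ≥ 0`. Symmetrised, this is the fibrewise inequality. For
antitone `f`, `g` apply this to `-f`, `-g`.
-/

open Polynomial

/-- The rank (height) of an element: the length of the longest chain having it
as maximal element. -/
noncomputable def latticeRank {L : Type*} [Preorder L] (a : L) : ℕ :=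
  sSup {k | ∃ c : Fin (k + 1) → L, StrictMono c ∧ c (Fin.last k) = a}

open Finset OrderDual

section Rank

variable {α : Type*} [PartialOrder α]

lemma latticeRank_eq_of_covBy [WellFoundedGT α] (φ : α → ℕ) (hφ : StrictMono φ)
    (hmin : ∀ x, IsMin x → φ x = 0) (hcov : ∀ x y, y ⋖ x → φ x ≤ φ y + 1) (x : α) :
    latticeRank x = φ x := by
  have hseries : ∀ n (x : α), φ x = n → ∃ p : LTSeries α, p.last = x ∧ p.length = n := by
    intro n
    induction n with
    | zero => exact fun x _ => ⟨RelSeries.singleton _ x, rfl, rfl⟩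
    | succ n ih =>
      intro x hx
      obtain ⟨y, hyx⟩ := exists_covBy_of_wellFoundedGT (a := x) fun h => by simp [hmin x h] at hx
      have hlt := hφ hyx.lt
      have hle := hcov x y hyx
      obtain ⟨p, hp, hlen⟩ := ih y (by omega)
      exact ⟨p.snoc x (hp ▸ hyx.lt), by simp, by simp [hlen]⟩
  refine IsGreatest.csSup_eq ⟨?_, ?_⟩
  · obtain ⟨p, hp, hlen⟩ := hseries (φ x) x rfl
    exact hlen ▸ ⟨p, p.strictMono, hp⟩
  · rintro k ⟨c, hc, hlast⟩
    have h : (k : ℕ∞) ≤ Order.height (φ x) := hlast ▸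
      (Order.length_le_height_last (p := LTSeries.mk k c hc)).trans
        (Order.height_le_height_apply_of_strictMono φ hφ _)
    simpa using h

end Rank

section Birkhoff

open OrderEmbedding

variable {α : Type*} [DistribLattice α] [Fintype α] [DecidablePred (SupIrred : α → Prop)]

lemma mem_birkhoffFinset {x : α} {j : {a : α // SupIrred a}} :
    j ∈ birkhoffFinset x ↔ (j : α) ≤ x := by
  have : Nonempty α := ⟨x⟩
  let := Fintype.toOrderBot α
  rw [← Finset.mem_coe, coe_birkhoffFinset, birkhoffSet_apply]
  rfl

variable [DecidableEq α]

-- Two sup-irreducibles below `x` but not below `y` both join `y` up to `x`, so by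
-- sup-primality each lies below the other.
lemma card_birkhoffFinset_le_of_covBy {x y : α} (h : y ⋖ x) :
    #(birkhoffFinset x) ≤ #(birkhoffFinset y) + 1 := by
  have hsup : ∀ j ∈ birkhoffFinset x \ birkhoffFinset y, y ⊔ (j : α) = x := by
    intro j hj
    simp only [mem_sdiff, mem_birkhoffFinset] at hj
    refine (h.eq_or_eq le_sup_left (sup_le h.le hj.1)).resolve_left fun he => hj.2 ?_
    exact he ▸ le_sup_right
  have hle : ∀ i ∈ birkhoffFinset x \ birkhoffFinset y,
      ∀ i' ∈ birkhoffFinset x \ birkhoffFinset y, (i : α) ≤ i' := by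
    intro i hi i' hi'
    have hiy : ¬ (i : α) ≤ y := fun hiy => (mem_sdiff.1 hi).2 (mem_birkhoffFinset.2 hiy)
    have hix : (i : α) ≤ y ⊔ i' := (hsup i' hi').symm ▸ mem_birkhoffFinset.1 (mem_sdiff.1 hi).1
    exact (i.2.supPrime.le_sup.1 hix).resolve_left hiy
  have hdiff : #(birkhoffFinset x \ birkhoffFinset y) ≤ 1 :=
    card_le_one.2 fun j hj j' hj' => Subtype.ext (le_antisymm (hle j hj j' hj') (hle j' hj' j hj))
  rw [← card_sdiff_add_card_eq_card (birkhoffFinset.monotone h.le)]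
  omega

lemma latticeRank_eq_card_birkhoffFinset (x : α) : latticeRank x = #(birkhoffFinset x) := by
  refine latticeRank_eq_of_covBy (fun x => #(birkhoffFinset x))
    (card_strictMono.comp birkhoffFinset.strictMono) (fun x hx => ?_)
    (fun x y h => card_birkhoffFinset_le_of_covBy h) x
  refine card_eq_zero.2 (eq_empty_of_forall_notMem fun j hj => ?_)
  exact j.2.not_isMin (hx.mono (mem_birkhoffFinset.1 hj))

end Birkhoff

theorem latticeRank_inf_add_latticeRank_sup {L : Type*} [DistribLattice L] [Finite L] (x y : L) :
    latticeRank (x ⊓ y) + latticeRank (x ⊔ y) = latticeRank x + latticeRank y := by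
  classical
  have := Fintype.ofFinite L
  simp only [latticeRank_eq_card_birkhoffFinset, OrderEmbedding.birkhoffFinset_sup,
    OrderEmbedding.birkhoffFinset_inf, card_inter_add_card_union]

section LogSupermodular

variable {α γ β : Type*}

def IsLogSupermodular [Lattice α] [Mul β] [LE β] (μ : α → β) : Prop :=
  ∀ a b, μ a * μ b ≤ μ (a ⊓ b) * μ (a ⊔ b)

variable [Lattice α] [Lattice γ] [CommSemiring β] [PartialOrder β] {μ : α → β} {ν : γ → β}

lemma IsLogSupermodular.dual (hμ : IsLogSupermodular μ) : IsLogSupermodular (μ ∘ ofDual) := by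
  intro a b
  simpa [mul_comm] using hμ (ofDual a) (ofDual b)

variable [IsOrderedRing β]

lemma IsLogSupermodular.prod (hμ₀ : 0 ≤ μ) (hν₀ : 0 ≤ ν) (hμ : IsLogSupermodular μ)
    (hν : IsLogSupermodular ν) : IsLogSupermodular fun p : α × γ => μ p.1 * ν p.2 := by
  intro p p'
  calc μ p.1 * ν p.2 * (μ p'.1 * ν p'.2) = μ p.1 * μ p'.1 * (ν p.2 * ν p'.2) := by ring
    _ ≤ μ (p.1 ⊓ p'.1) * μ (p.1 ⊔ p'.1) * (ν (p.2 ⊓ p'.2) * ν (p.2 ⊔ p'.2)) :=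
      mul_le_mul (hμ _ _) (hν _ _) (mul_nonneg (hν₀ _) (hν₀ _))
        (mul_nonneg (hμ₀ _) (hμ₀ _))
    _ = _ := by simp only [Prod.fst_inf, Prod.snd_inf, Prod.fst_sup, Prod.snd_sup]; ring

lemma IsLogSupermodular.indicator {s : Set α} (hsup : SupClosed s) (hinf : InfClosed s)
    (hμ₀ : 0 ≤ μ) (hμ : IsLogSupermodular μ) : IsLogSupermodular (s.indicator μ) := by
  intro a b
  by_cases hab : a ∈ s ∧ b ∈ s
  · simp only [Set.indicator_of_mem hab.1, Set.indicator_of_mem hab.2,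
      Set.indicator_of_mem (hinf hab.1 hab.2), Set.indicator_of_mem (hsup hab.1 hab.2)]
    exact hμ a b
  · have : s.indicator μ a * s.indicator μ b = 0 := by
      rcases not_and_or.1 hab with h | h <;> simp [Set.indicator_of_notMem h]
    rw [this]
    exact mul_nonneg (Set.indicator_nonneg (fun x _ => hμ₀ x) _)
      (Set.indicator_nonneg (fun x _ => hμ₀ x) _)

end LogSupermodular

section FKG

variable {α β : Type*} [DistribLattice α] [Fintype α] [CommRing β] [LinearOrder β]
  [IsStrictOrderedRing β] {μ f g : α → β}

theorem fkg_of_monotone (hμ₀ : 0 ≤ μ) (hμ : IsLogSupermodular μ) (hf : Monotone f)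
    (hg : Monotone g) :
    (∑ a, μ a * f a) * ∑ a, μ a * g a ≤ (∑ a, μ a) * ∑ a, μ a * (f a * g a) := by
  cases isEmpty_or_nonempty α
  · simp
  let := Fintype.toOrderBot α
  -- Shifting `f` and `g` by constants changes both sides by the same amount; shifting by `f ⊥`
  -- and `g ⊥` makes them nonnegative, so that Mathlib's `fkg` applies.
  have h := fkg (μ := μ) (f := fun a => f a - f ⊥) (g := fun a => g a - g ⊥) hμ₀
    (fun a => sub_nonneg.2 (hf bot_le)) (fun a => sub_nonneg.2 (hg bot_le))
    (fun a b hab => sub_le_sub_right (hf hab) _) (fun a b hab => sub_le_sub_right (hg hab) _) hμ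
  have hshift : ∀ (u : α → β) c, ∑ a, μ a * (u a - c) = ∑ a, μ a * u a - c * ∑ a, μ a := by
    intro u c
    simp only [mul_sub, sum_sub_distrib, mul_sum, mul_comm]
  have hshift₂ : ∑ a, μ a * ((f a - f ⊥) * (g a - g ⊥)) = ∑ a, μ a * (f a * g a)
      - f ⊥ * ∑ a, μ a * g a - g ⊥ * ∑ a, μ a * f a + f ⊥ * g ⊥ * ∑ a, μ a := by
    simp only [mul_sum, ← sum_sub_distrib, ← sum_add_distrib]
    exact sum_congr rfl fun a _ => by ring
  beta_reduce at h
  rw [hshift, hshift, hshift₂] at h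
  linear_combination h

theorem sum_mul_mul_nonneg_of_sum_mul_eq_zero (hμ₀ : 0 ≤ μ) (hμ : IsLogSupermodular μ)
    (hf : Monotone f) (hg : Monotone g) (h : ∑ a, μ a * f a = 0) :
    0 ≤ ∑ a, μ a * (f a * g a) := by
  have key := fkg_of_monotone hμ₀ hμ hf hg
  rw [h, zero_mul] at key
  rcases (Finset.sum_nonneg fun a _ => hμ₀ a).eq_or_lt with hzero | hpos
  · simp [(Fintype.sum_eq_zero_iff_of_nonneg hμ₀).1 hzero.symm]
  · exact nonneg_of_mul_nonneg_right key hpos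

end FKG

section Fiber

variable {L : Type*} [DistribLattice L]

lemma sup_inf_inf_eq_of_eq {x y x' y' : L} (hinf : x ⊓ y = x' ⊓ y') (hsup : x ⊔ y = x' ⊔ y') :
    (x ⊔ x') ⊓ (y ⊓ y') = x ⊓ y ∧ (x ⊔ x') ⊔ (y ⊓ y') = x ⊔ y := by
  constructor
  · refine le_antisymm ?_ (le_inf (inf_le_left.trans le_sup_left) (le_inf inf_le_right ?_))
    · rw [inf_sup_right]
      exact sup_le (inf_le_inf_left x inf_le_left) (hinf ▸ inf_le_inf_left x' inf_le_right)
    · exact hinf ▸ inf_le_right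
  · refine le_antisymm (sup_le (sup_le le_sup_left (hsup ▸ le_sup_left))
      (inf_le_left.trans le_sup_right)) ?_
    rw [sup_inf_left]
    exact le_inf (sup_le_sup_right le_sup_left y)
      (hsup ▸ sup_le_sup_right le_sup_right y')

def infSup (p : L × L) : L × L := (p.1 ⊓ p.2, p.1 ⊔ p.2)

def infSupFiber (q : L × L) : Set (L × Lᵒᵈ) := {p | infSup (p.1, ofDual p.2) = q}

lemma supClosed_infSupFiber (q : L × L) : SupClosed (infSupFiber q) := by
  obtain ⟨a, b⟩ := q
  rintro ⟨x, y⟩ hp ⟨x', y'⟩ hp'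
  simp only [infSupFiber, infSup, Set.mem_ofPred_eq, Prod.mk.injEq] at hp hp' ⊢
  obtain ⟨h1, h2⟩ := sup_inf_inf_eq_of_eq (hp.1.trans hp'.1.symm) (hp.2.trans hp'.2.symm)
  exact ⟨h1.trans hp.1, h2.trans hp.2⟩

lemma infClosed_infSupFiber (q : L × L) : InfClosed (infSupFiber q) := by
  obtain ⟨a, b⟩ := q
  rintro ⟨x, y⟩ hp ⟨x', y'⟩ hp'
  simp only [infSupFiber, infSup, Set.mem_ofPred_eq, Prod.mk.injEq] at hp hp' ⊢
  obtain ⟨h1, h2⟩ := sup_inf_inf_eq_of_eq (L := Lᵒᵈ) (x := toDual x) (y := y) (x' := toDual x')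
    (y' := y') (hp.2.trans hp'.2.symm) (hp.1.trans hp'.1.symm)
  exact ⟨h2.trans hp.1, h1.trans hp.2⟩

variable {β : Type*} [CommRing β] {μ : L → β}

noncomputable def fiberWeight (μ : L → β) (q : L × L) : L × L → β :=
  {p | infSup p = q}.indicator fun p => μ p.1 * μ p.2

lemma fiberWeight_mul [DecidableEq L] (q p : L × L) (u : β) :
    fiberWeight μ q p * u = if infSup p = q then μ p.1 * μ p.2 * u else 0 := by
  simp only [fiberWeight, Set.indicator_apply, Set.mem_ofPred_eq]
  split_ifs <;> ring

lemma fiberWeight_swap (q p : L × L) : fiberWeight μ q p.swap = fiberWeight μ q p := by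
  classical
  simp [fiberWeight, Set.indicator_apply, infSup, inf_comm, sup_comm, mul_comm]

lemma sum_fiberWeight_mul_swap [Fintype L] (q : L × L) (F : L × L → β) :
    ∑ p, fiberWeight μ q p * F p.swap = ∑ p, fiberWeight μ q p * F p := by
  rw [← (Equiv.prodComm L L).sum_comp]
  simp only [Equiv.prodComm_apply, Prod.swap_swap, fiberWeight_swap]

variable [LinearOrder β] [IsStrictOrderedRing β]

lemma sum_fiberWeight_mul_sub_eq_zero [Fintype L] (q : L × L) (f : L → β) :
    ∑ p, fiberWeight μ q p * (f p.1 - f p.2) = 0 := by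
  have h := sum_fiberWeight_mul_swap (μ := μ) q fun p => f p.1 - f p.2
  simp only [Prod.fst_swap, Prod.snd_swap, mul_sub, sum_sub_distrib] at h ⊢
  linarith

lemma isLogSupermodular_fiberWeight (hμ₀ : 0 ≤ μ) (hμ : IsLogSupermodular μ) (q : L × L) :
    IsLogSupermodular fun p : L × Lᵒᵈ => fiberWeight μ q (p.1, ofDual p.2) :=
  (hμ.prod (ν := μ ∘ ofDual) hμ₀ (fun _ => hμ₀ _) hμ.dual).indicator (supClosed_infSupFiber q)
    (infClosed_infSupFiber q) fun _ => mul_nonneg (hμ₀ _) (hμ₀ _)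

lemma sum_fiberWeight_mul_sub_mul_sub_nonneg [Fintype L] (hμ₀ : 0 ≤ μ) (hμ : IsLogSupermodular μ)
    {f g : L → β} (hf : Monotone f) (hg : Monotone g) (q : L × L) :
    0 ≤ ∑ p, fiberWeight μ q p * ((f p.1 - f p.2) * (g p.1 - g p.2)) :=
  sum_mul_mul_nonneg_of_sum_mul_eq_zero (α := L × Lᵒᵈ)
    (Set.indicator_nonneg fun _ _ => mul_nonneg (hμ₀ _) (hμ₀ _))
    (isLogSupermodular_fiberWeight hμ₀ hμ q)
    (fun _ _ h => sub_le_sub (hf h.1) (hf (ofDual_le_ofDual.2 h.2)))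
    (fun _ _ h => sub_le_sub (hg h.1) (hg (ofDual_le_ofDual.2 h.2)))
    (sum_fiberWeight_mul_sub_eq_zero q f)

lemma sum_infSup_fiber_le [Fintype L] [DecidableEq L] (hμ₀ : 0 ≤ μ) (hμ : IsLogSupermodular μ)
    {f g : L → β} (hf : Monotone f) (hg : Monotone g) (q : L × L) :
    ∑ p with infSup p = q, f p.1 * μ p.1 * (g p.2 * μ p.2) ≤
      ∑ p with infSup p = q, μ p.1 * (f p.2 * g p.2 * μ p.2) := by
  have hcov := sum_fiberWeight_mul_sub_mul_sub_nonneg hμ₀ hμ hf hg q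
  have e₁ := sum_fiberWeight_mul_swap (μ := μ) q fun p => f p.1 * g p.1
  have e₂ := sum_fiberWeight_mul_swap (μ := μ) q fun p => f p.1 * g p.2
  simp only [Prod.fst_swap, Prod.snd_swap] at e₁ e₂
  simp only [mul_sub, sub_mul, sum_sub_distrib] at hcov
  calc ∑ p with infSup p = q, f p.1 * μ p.1 * (g p.2 * μ p.2)
      = ∑ p, fiberWeight μ q p * (f p.1 * g p.2) := by
        rw [sum_filter]
        exact sum_congr rfl fun p _ => by rw [fiberWeight_mul]; ring_nf
    _ ≤ ∑ p, fiberWeight μ q p * (f p.2 * g p.2) := by linarith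
    _ = ∑ p with infSup p = q, μ p.1 * (f p.2 * g p.2 * μ p.2) := by
        rw [sum_filter]
        exact sum_congr rfl fun p _ => by rw [fiberWeight_mul]; ring_nf

end Fiber

section Polynomial

variable {ι R : Type*} [Fintype ι] [CommSemiring R]

lemma coeff_sum_mul_sum (r : ι → ℕ) (a b : ι → R) (k : ℕ) :
    ((∑ x, C (a x) * X ^ r x) * ∑ x, C (b x) * X ^ r x).coeff k =
      ∑ p : ι × ι with r p.1 + r p.2 = k, a p.1 * b p.2 := by
  rw [sum_mul_sum, ← Fintype.sum_prod_type', finsetSum_coeff, sum_filter]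
  refine sum_congr rfl fun p _ => ?_
  rw [mul_mul_mul_comm, ← C_mul, ← pow_add, coeff_C_mul_X_pow]
  exact if_congr eq_comm rfl rfl

end Polynomial

lemma sum_filter_comp_le_of_fiberwise {ι κ M : Type*} [Fintype ι] [DecidableEq κ]
    [AddCommMonoid M] [PartialOrder M] [IsOrderedAddMonoid M] (π : ι → κ) (P : κ → Prop)
    [DecidablePred P] {u v : ι → M}
    (h : ∀ q, ∑ i with π i = q, u i ≤ ∑ i with π i = q, v i) :
    ∑ i with P (π i), u i ≤ ∑ i with P (π i), v i := by
  have hsplit : ∀ w : ι → M, ∑ i with P (π i), w i = ∑ q ∈ univ.image π with P q,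
      ∑ i with π i = q, w i := by
    intro w
    rw [← sum_fiberwise_of_maps_to (t := (univ.image π).filter P) (g := π) (by simp)]
    refine sum_congr rfl fun q hq => sum_congr ?_ fun _ _ => rfl
    ext i
    simp only [mem_filter, mem_univ, true_and]
    exact ⟨And.right, fun hi => ⟨hi ▸ (mem_filter.1 hq).2, hi⟩⟩
  rw [hsplit, hsplit]
  exact sum_le_sum fun q _ => h q

theorem q_fkg_inequality_general (L : Type*) [DistribLattice L] [Fintype L]
    (μ f g : L → ℝ)
    (hμ : ∀ x, 0 ≤ μ x)
    (hlsm : ∀ x y : L, μ x * μ y ≤ μ (x ⊔ y) * μ (x ⊓ y))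
    (hmono : (Monotone f ∧ Monotone g) ∨ (Antitone f ∧ Antitone g)) :
    ∀ k : ℕ,
      ((∑ x : L, C (f x * μ x) * X ^ latticeRank x) *
        (∑ x : L, C (g x * μ x) * X ^ latticeRank x)).coeff k ≤
      ((∑ x : L, C (μ x) * X ^ latticeRank x) *
        (∑ x : L, C (f x * g x * μ x) * X ^ latticeRank x)).coeff k := by
  classical
  intro k
  have hμ' : IsLogSupermodular μ := fun x y => by simpa only [mul_comm (μ (x ⊔ y))] using hlsm x y
  have hfiber : ∀ q, ∑ p with infSup p = q, f p.1 * μ p.1 * (g p.2 * μ p.2) ≤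
      ∑ p with infSup p = q, μ p.1 * (f p.2 * g p.2 * μ p.2) := by
    rcases hmono with ⟨hf, hg⟩ | ⟨hf, hg⟩
    · exact sum_infSup_fiber_le hμ hμ' hf hg
    · simpa using sum_infSup_fiber_le hμ hμ' hf.neg hg.neg
  have hrank : univ.filter (fun p : L × L => latticeRank p.1 + latticeRank p.2 = k) =
      univ.filter fun p => latticeRank (infSup p).1 + latticeRank (infSup p).2 = k :=
    filter_congr fun p _ => by rw [infSup, latticeRank_inf_add_latticeRank_sup]
  rw [coeff_sum_mul_sum, coeff_sum_mul_sum, hrank]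
  exact sum_filter_comp_le_of_fiberwise infSup
    (fun q => latticeRank q.1 + latticeRank q.2 = k) hfiber

/-- Björner's q-analogue of the FKG inequality. -/
theorem q_fkg_inequality (L : Type*) [DistribLattice L] [Fintype L]
    (μ f g : L → ℝ)
    (hμ : ∀ x, 0 ≤ μ x) (hf : ∀ x, 0 ≤ f x) (hg : ∀ x, 0 ≤ g x)
    (hlsm : ∀ x y : L, μ x * μ y ≤ μ (x ⊔ y) * μ (x ⊓ y))
    (hmono : (Monotone f ∧ Monotone g) ∨ (Antitone f ∧ Antitone g)) :
    ∀ k : ℕ,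
      ((∑ x : L, C (f x * μ x) * X ^ latticeRank x) *
        (∑ x : L, C (g x * μ x) * X ^ latticeRank x)).coeff k ≤
      ((∑ x : L, C (μ x) * X ^ latticeRank x) *
        (∑ x : L, C (f x * g x * μ x) * X ^ latticeRank x)).coeff k :=
  q_fkg_inequality_general L μ f g hμ hlsm hmono
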